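/- In the node-activation model, the entrywise expectation of the squared random Laplacian satisfies E[L_1²] = p³ (L_G² − 2 L_G) + 2 p² L_G. -/

import Mathlib

/-! The random Laplacian `L₁` is the weighted Laplacian of the weights `w u v = a u v X_u X_v`,
and every entry of `L₁²` is a linear combination of the products `w u v * w u v'` of the weights
of two edges at a common vertex `u`. Such a product has expectation `a u v a u v' p ^ #{u, v, v'}`,
that is `p³ a u v a u v'` for two distinct edges and `p² a u v` when `v = v'`. By linearity the
first part contributes `p³ L_G²` and the correction for `v = v'` contributes `2 (p² - p³) L_G`. -/

open MeasureTheory ProbabilityTheory Matrix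

noncomputable section

/-- The real-valued indicator of a Boolean. -/
def ind (b : Bool) : ℝ := if b then 1 else 0

/-- Adjacency matrix of the random induced subgraph: edge {i,j} of `G` is kept
iff both endpoints are active. -/
def A1 {N : ℕ} (G : SimpleGraph (Fin N)) [DecidableRel G.Adj] (X : Fin N → Bool) :
    Matrix (Fin N) (Fin N) ℝ :=
  Matrix.of fun i j => (G.adjMatrix ℝ) i j * ind (X i) * ind (X j)

/-- Diagonal degree matrix of the random induced subgraph. -/
def D1 {N : ℕ} (G : SimpleGraph (Fin N)) [DecidableRel G.Adj] (X : Fin N → Bool) :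
    Matrix (Fin N) (Fin N) ℝ :=
  Matrix.diagonal fun i => ∑ j, A1 G X i j

/-- Laplacian of the random induced subgraph. -/
def L1 {N : ℕ} (G : SimpleGraph (Fin N)) [DecidableRel G.Adj] (X : Fin N → Bool) :
    Matrix (Fin N) (Fin N) ℝ :=
  D1 G X - A1 G X

section WeightedLaplacian

variable {n R : Type*} [Fintype n] [DecidableEq n] [CommRing R]

def weightedLaplacian (w : Matrix n n R) : Matrix n n R :=
  diagonal (fun i => ∑ j, w i j) - w

/-- `φ u v v'` stands for the product `w u v * w u v'` of the weights of the two edges of the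
wedge `v — u — v'`: the entries of the squared weighted Laplacian are linear in these products. -/
def wedgeSum (i j : n) : (n → n → n → R) →ₗ[R] R where
  toFun φ := (if i = j then ∑ v, ∑ v', φ i v v' else 0) - ∑ v, φ i v j - ∑ v, φ j i v
    + ∑ u, φ u i j
  map_add' φ ψ := by
    simp only [Pi.add_apply, Finset.sum_add_distrib]
    split_ifs <;> ring
  map_smul' c φ := by
    simp only [Pi.smul_apply, smul_eq_mul, ← Finset.mul_sum, RingHom.id_apply]
    split_ifs <;> ring

lemma wedgeSum_apply (i j : n) (φ : n → n → n → R) :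
    wedgeSum i j φ = (if i = j then ∑ v, ∑ v', φ i v v' else 0) - ∑ v, φ i v j - ∑ v, φ j i v
      + ∑ u, φ u i j := rfl

lemma weightedLaplacian_mul_self_apply {w : Matrix n n R} (hw : w.IsSymm) (i j : n) :
    (weightedLaplacian w * weightedLaplacian w) i j
      = wedgeSum i j (fun u v v' => w u v * w u v') := by
  have hpath : ∑ u, w u i * w u j = ∑ u, w i u * w u j :=
    Finset.sum_congr rfl fun u _ => by rw [hw.apply i u]
  simp only [weightedLaplacian, mul_apply, Matrix.sub_apply, diagonal_apply, wedgeSum_apply,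
    sub_mul, mul_sub, Finset.sum_sub_distrib, ite_mul, mul_ite, zero_mul, mul_zero,
    Finset.sum_ite_eq, Finset.sum_ite_eq', Finset.mem_univ, if_true, Finset.sum_mul,
    Finset.mul_sum, Finset.sum_ite_irrel, Finset.sum_const_zero, hpath, hw.apply i j]
  split_ifs with h
  · subst h
    rw [Finset.sum_comm (f := fun x y => w i y * w i x)]
    ring
  · ring

lemma wedgeSum_ite_eq {w : Matrix n n R} (hw : w.IsSymm) (i j : n) :
    wedgeSum i j (fun u v v' => if v = v' then w u v else 0) = 2 * weightedLaplacian w i j := by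
  have hdeg : ∑ u, w u i = ∑ u, w i u := Finset.sum_congr rfl fun u _ => hw.apply i u
  simp only [weightedLaplacian, Matrix.sub_apply, diagonal_apply, wedgeSum_apply,
    Finset.sum_ite_eq, Finset.sum_ite_eq', Finset.mem_univ, if_true, Finset.sum_ite_irrel,
    Finset.sum_const_zero, hdeg, hw.apply i j]
  split_ifs <;> ring

lemma SimpleGraph.lapMatrix_eq_weightedLaplacian (G : SimpleGraph n) [DecidableRel G.Adj] :
    G.lapMatrix R = weightedLaplacian (G.adjMatrix R) := by
  ext i j
  simp only [SimpleGraph.lapMatrix, SimpleGraph.degMatrix, weightedLaplacian, Matrix.sub_apply,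
    diagonal_apply, SimpleGraph.adjMatrix_apply, G.degree_eq_sum_if_adj]

end WeightedLaplacian

lemma integral_linearMap_pi₃ {n Ω : Type*} [Fintype n] [MeasurableSpace Ω] {μ : Measure Ω}
    (L : (n → n → n → ℝ) →ₗ[ℝ] ℝ) {φ : Ω → n → n → n → ℝ}
    (hφ : ∀ u v v', Integrable (fun ω => φ ω u v v') μ) :
    ∫ ω, L (φ ω) ∂μ = L (fun u v v' => ∫ ω, φ ω u v v' ∂μ) := by
  have hφ₂ : ∀ u v, Integrable (fun ω => φ ω u v) μ := fun u v => Integrable.of_eval (hφ u v)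
  have hφ₁ : ∀ u, Integrable (fun ω => φ ω u) μ := fun u => Integrable.of_eval (hφ₂ u)
  rw [← L.coe_toContinuousLinearMap',
    ContinuousLinearMap.integral_comp_comm _ (Integrable.of_eval hφ₁)]
  congr
  ext u v v'
  rw [eval_integral hφ₁, eval_integral (hφ₂ u), eval_integral (hφ u v)]

section Bernoulli

variable {ι Ω : Type*} {X : ι → Ω → Bool}

lemma prod_ind_eq_indicator (s : Finset ι) (ω : Ω) :
    ∏ v ∈ s, ind (X v ω) = (⋂ v ∈ s, {ω | X v ω = true}).indicator 1 ω := by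
  by_cases h : ω ∈ ⋂ v ∈ s, {ω | X v ω = true}
  · rw [Set.indicator_of_mem h]
    simp only [Set.mem_iInter, Set.mem_ofPred_eq] at h
    exact Finset.prod_eq_one fun v hv => by simp [ind, h v hv]
  · rw [Set.indicator_of_notMem h]
    simp only [Set.mem_iInter, Set.mem_ofPred_eq, not_forall] at h
    obtain ⟨v, hv, hXv⟩ := h
    exact Finset.prod_eq_zero hv (by simp [ind, hXv])

variable [MeasurableSpace Ω] {μ : Measure Ω}

lemma measurableSet_biInter_eq_true (hmeas : ∀ v, Measurable (X v)) (s : Finset ι) :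
    MeasurableSet (⋂ v ∈ s, {ω | X v ω = true}) :=
  .biInter s.countable_toSet fun v _ => hmeas v (measurableSet_singleton true)

lemma integrable_prod_ind [IsFiniteMeasure μ] (hmeas : ∀ v, Measurable (X v)) (s : Finset ι) :
    Integrable (fun ω => ∏ v ∈ s, ind (X v ω)) μ := by
  simp_rw [prod_ind_eq_indicator]
  exact (integrable_const 1).indicator (measurableSet_biInter_eq_true hmeas s)

lemma integral_prod_ind {p : ℝ} (hp0 : 0 ≤ p) (hmeas : ∀ v, Measurable (X v))
    (hindep : iIndepFun X μ) (hbern : ∀ v, μ {ω | X v ω = true} = ENNReal.ofReal p)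
    (s : Finset ι) :
    ∫ ω, ∏ v ∈ s, ind (X v ω) ∂μ = p ^ s.card := by
  simp_rw [prod_ind_eq_indicator]
  rw [integral_indicator_one (measurableSet_biInter_eq_true hmeas s), measureReal_def,
    hindep.meas_biInter fun v _ => ⟨{true}, trivial, by ext; simp⟩,
    Finset.prod_congr rfl fun v _ => hbern v, Finset.prod_const, ENNReal.toReal_pow,
    ENNReal.toReal_ofReal hp0]

end Bernoulli

lemma Finset.prod_insert_of_mul_self {ι M : Type*} [DecidableEq ι] [CommMonoid M]
    {f : ι → M} (hf : ∀ t, f t * f t = f t) (a : ι) (s : Finset ι) :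
    ∏ t ∈ insert a s, f t = f a * ∏ t ∈ s, f t := by
  by_cases ha : a ∈ s
  · rw [Finset.insert_eq_of_mem ha, ← Finset.mul_prod_erase s f ha, ← mul_assoc, hf]
  · exact Finset.prod_insert ha

lemma ind_mul_self (b : Bool) : ind b * ind b = ind b := by cases b <;> simp [ind]

lemma SimpleGraph.adjMatrix_mul_adjMatrix_mul_pow_card {V : Type*} [DecidableEq V]
    (G : SimpleGraph V) [DecidableRel G.Adj] (p : ℝ) (u v v' : V) :
    G.adjMatrix ℝ u v * G.adjMatrix ℝ u v' * p ^ ({u, v, v'} : Finset V).card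
      = p ^ 3 * (G.adjMatrix ℝ u v * G.adjMatrix ℝ u v')
        + (p ^ 2 - p ^ 3) * if v = v' then G.adjMatrix ℝ u v else 0 := by
  by_cases huv : G.Adj u v
  · by_cases huv' : G.Adj u v'
    · rcases eq_or_ne v v' with rfl | hvv'
      · simp [huv, G.ne_of_adj huv]
      · rw [Finset.card_insert_of_notMem (by simp [G.ne_of_adj huv, G.ne_of_adj huv']),
          Finset.card_pair hvv']
        simp [huv, huv', hvv']
    · split_ifs <;> simp_all
  · split_ifs <;> simp_all

section Activation

variable {N : ℕ} (G : SimpleGraph (Fin N)) [DecidableRel G.Adj]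

lemma L1_eq_weightedLaplacian (x : Fin N → Bool) : L1 G x = weightedLaplacian (A1 G x) := rfl

lemma A1_isSymm (x : Fin N → Bool) : (A1 G x).IsSymm := by
  ext u v
  simp only [transpose_apply, A1, of_apply, (G.isSymm_adjMatrix (α := ℝ)).apply u v]
  ring

lemma A1_mul_A1_apply (x : Fin N → Bool) (u v v' : Fin N) :
    A1 G x u v * A1 G x u v'
      = G.adjMatrix ℝ u v * G.adjMatrix ℝ u v' * ∏ t ∈ {u, v, v'}, ind (x t) := by
  have hind : ∀ t, ind (x t) * ind (x t) = ind (x t) := fun t => ind_mul_self (x t)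
  rw [Finset.prod_insert_of_mul_self hind, Finset.prod_insert_of_mul_self hind,
    Finset.prod_singleton]
  simp only [A1, of_apply]
  linear_combination G.adjMatrix ℝ u v * G.adjMatrix ℝ u v' * ind (x v) * ind (x v') * hind u

variable {Ω : Type*} [MeasurableSpace Ω] {μ : Measure Ω} {p : ℝ} {X : Fin N → Ω → Bool}

lemma integrable_A1_mul_A1 [IsFiniteMeasure μ] (hmeas : ∀ v, Measurable (X v))
    (u v v' : Fin N) :
    Integrable (fun ω => A1 G (X · ω) u v * A1 G (X · ω) u v') μ := by
  simp_rw [A1_mul_A1_apply]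
  exact (integrable_prod_ind hmeas _).const_mul _

lemma integral_A1_mul_A1 (hp0 : 0 ≤ p) (hmeas : ∀ v, Measurable (X v)) (hindep : iIndepFun X μ)
    (hbern : ∀ v, μ {ω | X v ω = true} = ENNReal.ofReal p) (u v v' : Fin N) :
    ∫ ω, A1 G (X · ω) u v * A1 G (X · ω) u v' ∂μ
      = p ^ 3 * (G.adjMatrix ℝ u v * G.adjMatrix ℝ u v')
        + (p ^ 2 - p ^ 3) * if v = v' then G.adjMatrix ℝ u v else 0 := by
  simp_rw [A1_mul_A1_apply]
  rw [integral_const_mul, integral_prod_ind hp0 hmeas hindep hbern,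
    G.adjMatrix_mul_adjMatrix_mul_pow_card]

end Activation

theorem stmt7_general {N : ℕ} (G : SimpleGraph (Fin N)) [DecidableRel G.Adj]
    {Ω : Type*} [MeasurableSpace Ω] (μ : Measure Ω) [IsProbabilityMeasure μ]
    (p : ℝ) (hp0 : 0 ≤ p)
    (X : Fin N → Ω → Bool)
    (hmeas : ∀ i, Measurable (X i))
    (hindep : iIndepFun X μ)
    (hbern : ∀ i, μ {ω | X i ω = true} = ENNReal.ofReal p) :
    ∀ i j, ∫ ω, (L1 G (fun v => X v ω) * L1 G (fun v => X v ω)) i j ∂μ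
      = (p ^ 3 • (G.lapMatrix ℝ * G.lapMatrix ℝ - 2 • G.lapMatrix ℝ)
          + (2 * p ^ 2) • G.lapMatrix ℝ) i j := by
  intro i j
  have hadj : (G.adjMatrix ℝ).IsSymm := G.isSymm_adjMatrix
  have hmoments : (fun u v v' => ∫ ω, A1 G (X · ω) u v * A1 G (X · ω) u v' ∂μ)
      = p ^ 3 • (fun u v v' => G.adjMatrix ℝ u v * G.adjMatrix ℝ u v')
        + (p ^ 2 - p ^ 3) • (fun u v v' => if v = v' then G.adjMatrix ℝ u v else 0) := by
    ext u v v'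
    simp only [integral_A1_mul_A1 G hp0 hmeas hindep hbern, Pi.add_apply, Pi.smul_apply,
      smul_eq_mul]
  calc ∫ ω, (L1 G (X · ω) * L1 G (X · ω)) i j ∂μ
      = ∫ ω, wedgeSum i j (fun u v v' => A1 G (X · ω) u v * A1 G (X · ω) u v') ∂μ := by
        simp only [L1_eq_weightedLaplacian, weightedLaplacian_mul_self_apply (A1_isSymm G _)]
    _ = p ^ 3 * (G.lapMatrix ℝ * G.lapMatrix ℝ) i j
          + (p ^ 2 - p ^ 3) * (2 * G.lapMatrix ℝ i j) := by
        rw [integral_linearMap_pi₃ _ (integrable_A1_mul_A1 G hmeas), hmoments, map_add,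
          map_smul, map_smul, ← weightedLaplacian_mul_self_apply hadj, wedgeSum_ite_eq hadj,
          G.lapMatrix_eq_weightedLaplacian, smul_eq_mul, smul_eq_mul]
    _ = _ := by
        simp only [Matrix.add_apply, Matrix.smul_apply, Matrix.sub_apply, smul_eq_mul]
        rw [nsmul_eq_mul, Nat.cast_ofNat]
        ring

theorem stmt7 {N : ℕ} (G : SimpleGraph (Fin N)) [DecidableRel G.Adj]
    {Ω : Type*} [MeasurableSpace Ω] (μ : Measure Ω) [IsProbabilityMeasure μ]
    (p : ℝ) (hp0 : 0 ≤ p) (hp1 : p ≤ 1)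
    (X : Fin N → Ω → Bool)
    (hmeas : ∀ i, Measurable (X i))
    (hindep : iIndepFun X μ)
    (hbern : ∀ i, μ {ω | X i ω = true} = ENNReal.ofReal p) :
    ∀ i j, ∫ ω, (L1 G (fun v => X v ω) * L1 G (fun v => X v ω)) i j ∂μ
      = (p ^ 3 • (G.lapMatrix ℝ * G.lapMatrix ℝ - 2 • G.lapMatrix ℝ)
          + (2 * p ^ 2) • G.lapMatrix ℝ) i j :=
  stmt7_general G μ p hp0 X hmeas hindep hbern

end
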